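/- In the discrete Heisenberg group H₃, for the sequence hₙ = (a^{ε_a} b^{ε_b})^n with ε_a, ε_b ∈ {±1}, and any fixed g = c^z b^y a^x, for all sufficiently large n one has d(g, hₙ) = |ε_b n − y| + |ε_a n − x|; consequently d(g, hₙ) − d(e, hₙ) → −ε_a x − ε_b y as n → ∞. -/

import Mathlib

/-!
By left-invariance `d(g, hₙ)` is the word length of `g⁻¹ hₙ`. Each generator changes the
abelianised coordinates `(x, y)` by one unit, so a word for `w` has length at least
`|w.x| + |w.y|`. Conversely, a monotone staircase of `A` steps `a^{±1}` and `B` steps `b^{±1}`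
can enclose any area between `0` and `A B`, so the bound is attained as soon as the central
coordinate of `w` (up to sign) lies in that range. For `w = g⁻¹ hₙ` we have `A, B = n + O(1)`
while the central coordinate is `n (n + 1) / 2 + O(n)`, which fits for large `n`; subtracting
the case `g = 1` then makes the difference eventually constant.
-/

/-- The discrete Heisenberg group `H₃`: `⟨x, y, z⟩` encodes the 3×3 upper unitriangular
integer matrix `(1 x z; 0 1 y; 0 0 1)`, with matrix multiplication. -/
@[ext] structure Heis where
  x : ℤ
  y : ℤ
  z : ℤ

namespace Heis

instance : Mul Heis := ⟨fun p q => ⟨p.x + q.x, p.y + q.y, p.z + q.z + p.x * q.y⟩⟩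
instance : One Heis := ⟨⟨0, 0, 0⟩⟩
instance : Inv Heis := ⟨fun p => ⟨-p.x, -p.y, p.x * p.y - p.z⟩⟩

theorem mul_def (p q : Heis) :
    p * q = ⟨p.x + q.x, p.y + q.y, p.z + q.z + p.x * q.y⟩ := rfl
theorem one_def : (1 : Heis) = ⟨0, 0, 0⟩ := rfl
theorem inv_def (p : Heis) : p⁻¹ = ⟨-p.x, -p.y, p.x * p.y - p.z⟩ := rfl

instance : Group Heis where
  mul_assoc p q r := by
    simp only [mul_def, mk.injEq]
    refine ⟨by ring, by ring, by ring⟩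
  one_mul p := by
    obtain ⟨px, py, pz⟩ := p
    simp only [one_def, mul_def, mk.injEq]
    refine ⟨by ring, by ring, by ring⟩
  mul_one p := by
    obtain ⟨px, py, pz⟩ := p
    simp only [one_def, mul_def, mk.injEq]
    refine ⟨by ring, by ring, by ring⟩
  inv_mul_cancel p := by
    obtain ⟨px, py, pz⟩ := p
    simp only [inv_def, mul_def, one_def, mk.injEq]
    refine ⟨by ring, by ring, by ring⟩

/-- The generator `a` (the elementary matrix with a `1` in position (1,2)). -/
def a : Heis := ⟨1, 0, 0⟩
/-- The generator `b` (the elementary matrix with a `1` in position (2,3)). -/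
def b : Heis := ⟨0, 1, 0⟩
/-- The commutator `c = [a,b] = a⁻¹b⁻¹ab` (the elementary matrix with a `1` in (1,3)). -/
def c : Heis := ⟨0, 0, 1⟩

/-- The standard generating set `S = {a, b, a⁻¹, b⁻¹}`. -/
def S : Set Heis := {a, b, a⁻¹, b⁻¹}

/-- The word metric for the generating set `S`: the length of the shortest word with
letters in `S` leading from `g` to `h` in the Cayley graph. -/
noncomputable def wdist (g h : Heis) : ℕ :=
  sInf {n | ∃ l : List Heis, (∀ s ∈ l, s ∈ S) ∧ l.length = n ∧ g * l.prod = h}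

lemma zpow_mk_of_mul_eq_zero {u v : ℤ} (huv : u * v = 0) (w m : ℤ) :
    (⟨u, v, w⟩ : Heis) ^ m = ⟨m * u, m * v, m * w⟩ := by
  induction m using Int.induction_on with
  | zero => simp [one_def]
  | succ k ih =>
    rw [zpow_add_one, ih, mul_def]
    ext
    · ring
    · ring
    · linear_combination (k : ℤ) * huv
  | pred k ih =>
    rw [zpow_sub_one, ih, inv_def, mul_def]
    ext
    · ring
    · ring
    · linear_combination (k + 1 : ℤ) * huv

lemma a_zpow (m : ℤ) : a ^ m = ⟨m, 0, 0⟩ :=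
  (zpow_mk_of_mul_eq_zero (one_mul 0) 0 m).trans (by simp)

lemma b_zpow (m : ℤ) : b ^ m = ⟨0, m, 0⟩ :=
  (zpow_mk_of_mul_eq_zero (zero_mul 1) 0 m).trans (by simp)

lemma c_zpow (m : ℤ) : c ^ m = ⟨0, 0, m⟩ :=
  (zpow_mk_of_mul_eq_zero (zero_mul 0) 1 m).trans (by simp)

lemma mk_pow (u v w : ℤ) (n : ℕ) :
    (⟨u, v, w⟩ : Heis) ^ n = ⟨n * u, n * v, n * w + n.choose 2 * (u * v)⟩ := by
  induction n with
  | zero => simp [one_def]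
  | succ n ih =>
    rw [pow_succ, ih, mul_def]
    ext <;> dsimp only <;> push_cast [Nat.choose_succ_succ', Nat.choose_one_right] <;> ring

lemma zpow_mul_zpow_pow (εa εb : ℤ) (n : ℕ) :
    (a ^ εa * b ^ εb) ^ n = ⟨n * εa, n * εb, (n + 1).choose 2 * (εa * εb)⟩ := by
  rw [a_zpow, b_zpow, mul_def, mk_pow]
  ext <;> dsimp only <;> push_cast [Nat.choose_succ_succ', Nat.choose_one_right] <;> ring

lemma a_zpow_mem_S {ε : ℤ} (hε : ε = 1 ∨ ε = -1) : a ^ ε ∈ S := by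
  rcases hε with rfl | rfl <;> simp [S]

lemma b_zpow_mem_S {ε : ℤ} (hε : ε = 1 ∨ ε = -1) : b ^ ε ∈ S := by
  rcases hε with rfl | rfl <;> simp [S]

lemma abs_x_add_abs_y_of_mem_S {s : Heis} (hs : s ∈ S) : |s.x| + |s.y| = 1 := by
  rcases hs with rfl | rfl | rfl | rfl <;> simp [a, b, inv_def]

lemma abs_x_add_abs_y_le_length {l : List Heis} (hl : ∀ s ∈ l, s ∈ S) :
    |l.prod.x| + |l.prod.y| ≤ l.length := by
  induction l with
  | nil => simp [one_def]
  | cons s t ih =>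
    have hs := abs_x_add_abs_y_of_mem_S (hl s List.mem_cons_self)
    have ht := ih fun u hu => hl u (List.mem_cons_of_mem s hu)
    rw [List.prod_cons, List.length_cons, mul_def]
    push_cast
    linarith [abs_add_le s.x t.prod.x, abs_add_le s.y t.prod.y]

-- Prepending `a ^ εa` to a word adds `B` to the central coordinate, prepending `b ^ εb` adds
-- nothing; so each area in `[0, A * B]` is reached from a smaller staircase.
lemma exists_staircase {εa εb : ℤ} (ha : εa = 1 ∨ εa = -1) (hb : εb = 1 ∨ εb = -1)
    (A B : ℕ) (T : ℤ) (hT₀ : 0 ≤ T) (hT : T ≤ A * B) :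
    ∃ l : List Heis, (∀ s ∈ l, s ∈ S) ∧ l.length = A + B ∧
      l.prod = ⟨εa * A, εb * B, εa * εb * T⟩ := by
  induction A generalizing B T with
  | zero =>
    obtain rfl : T = 0 := by simp at hT; omega
    refine ⟨List.replicate B (b ^ εb), by simpa using fun _ => b_zpow_mem_S hb, by simp, ?_⟩
    rw [List.prod_replicate, ← zpow_natCast, ← zpow_mul, b_zpow]
    ext <;> simp
  | succ A ihA =>
    have a_first : ∀ (B : ℕ) (T : ℤ), (B : ℤ) ≤ T → T ≤ (A + 1 : ℕ) * B → ∃ l : List Heis,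
        (∀ s ∈ l, s ∈ S) ∧ l.length = A + 1 + B ∧
          l.prod = ⟨εa * (A + 1 : ℕ), εb * B, εa * εb * T⟩ := by
      intro B T hBT hT
      obtain ⟨l, hl, hlen, hprod⟩ := ihA B (T - B) (by linarith) (by push_cast at hT ⊢; linarith)
      refine ⟨a ^ εa :: l, ?_, by simp [hlen]; ring, ?_⟩
      · simpa [a_zpow_mem_S ha] using hl
      · rw [List.prod_cons, hprod, a_zpow, mul_def]
        ext <;> push_cast <;> ring
    induction B generalizing T with
    | zero => exact a_first 0 T hT₀ hT
    | succ B ihB =>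
      by_cases hBT : ((B + 1 : ℕ) : ℤ) ≤ T
      · exact a_first (B + 1) T hBT hT
      · obtain ⟨l, hl, hlen, hprod⟩ :=
          ihB T hT₀ (by push_cast at hBT ⊢; nlinarith)
        refine ⟨b ^ εb :: l, ?_, by simp [hlen]; ring, ?_⟩
        · simpa [b_zpow_mem_S hb] using hl
        · rw [List.prod_cons, hprod, b_zpow, mul_def]
          ext <;> push_cast <;> ring

lemma wdist_mul_prod_of_length_eq {l : List Heis} (hl : ∀ s ∈ l, s ∈ S)
    (hlen : (l.length : ℤ) = |l.prod.x| + |l.prod.y|) (g : Heis) :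
    wdist g (g * l.prod) = l.length := by
  have hmem : l.length ∈ {n | ∃ l' : List Heis, (∀ s ∈ l', s ∈ S) ∧ l'.length = n ∧
      g * l'.prod = g * l.prod} := ⟨l, hl, rfl, rfl⟩
  refine le_antisymm (Nat.sInf_le hmem) ?_
  obtain ⟨l', hl', hlen', hprod'⟩ := Nat.sInf_mem ⟨_, hmem⟩
  rw [wdist, ← hlen']
  have := abs_x_add_abs_y_le_length hl'
  rw [mul_left_cancel hprod'] at this
  omega

lemma wdist_mul_mk {εa εb : ℤ} (ha : εa = 1 ∨ εa = -1) (hb : εb = 1 ∨ εb = -1) (g : Heis)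
    {A B T : ℤ} (hA : 0 ≤ A) (hB : 0 ≤ B) (hT₀ : 0 ≤ T) (hT : T ≤ A * B) :
    (wdist g (g * ⟨εa * A, εb * B, εa * εb * T⟩) : ℤ) = A + B := by
  lift A to ℕ using hA
  lift B to ℕ using hB
  obtain ⟨l, hl, hlen, hprod⟩ := exists_staircase ha hb A B T hT₀ hT
  have habs : ∀ {ε : ℤ} (n : ℕ), (ε = 1 ∨ ε = -1) → |ε * n| = n := by
    rintro ε n (rfl | rfl) <;> simp
  rw [← hprod, wdist_mul_prod_of_length_eq hl (by rw [hprod]; simp [habs _ ha, habs _ hb, hlen])]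
  simp [hlen]

lemma abs_mul_natCast_sub {ε : ℤ} (hε : ε = 1 ∨ ε = -1) {w : ℤ} {n : ℕ} (hw : |w| ≤ n) :
    |ε * n - w| = n - ε * w := by
  rcases hε with rfl | rfl
  · rw [one_mul, one_mul, abs_of_nonneg (by linarith [le_abs_self w])]
  · rw [abs_of_nonpos (by linarith [neg_abs_le w])]; ring

lemma sub_mul_sub_mem_Icc_of_two_mul_le {n C p q u : ℤ} (hC : C * 2 = (n + 1) * n)
    (hn : 2 * (|p| + |q| + |u| + 1) ≤ n) :
    0 ≤ C - u - p * (n - q) ∧ C - u - p * (n - q) ≤ (n - p) * (n - q) := by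
  have hp₀ := abs_nonneg p
  have hq₀ := abs_nonneg q
  have hu₀ := abs_nonneg u
  have hn₀ : 0 ≤ n := by linarith
  have hnn := mul_le_mul_of_nonneg_right hn hn₀
  have hun : -u ≤ |u| * n := by nlinarith [neg_abs_le u]
  constructor
  · nlinarith [le_abs_self u, mul_le_mul_of_nonneg_right (le_abs_self p) hn₀,
      (neg_le_abs (p * q)).trans_eq (abs_mul p q), mul_nonneg hq₀ (by linarith : 0 ≤ n - |p|)]
  · nlinarith [mul_le_mul_of_nonneg_right (le_abs_self q) hn₀, mul_nonneg hp₀ hn₀]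

lemma eventually_wdist_zpow_mul_zpow_pow {εa εb : ℤ} (ha : εa = 1 ∨ εa = -1)
    (hb : εb = 1 ∨ εb = -1) (x y z : ℤ) :
    ∀ᶠ n : ℕ in Filter.atTop,
      (wdist (c ^ z * b ^ y * a ^ x) ((a ^ εa * b ^ εb) ^ n) : ℤ) = (n - εb * y) + (n - εa * x) := by
  have hg : c ^ z * b ^ y * a ^ x = ⟨x, y, z⟩ := by
    rw [a_zpow, b_zpow, c_zpow, mul_def, mul_def]
    ext <;> simp
  have hεa : εa * εa = 1 := by rcases ha with rfl | rfl <;> norm_num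
  have hεb : εb * εb = 1 := by rcases hb with rfl | rfl <;> norm_num
  filter_upwards [Filter.eventually_ge_atTop
    (2 * ((εa * x).natAbs + (εb * y).natAbs + (εa * εb * z).natAbs + 1))] with n hn
  replace hn : 2 * (|εa * x| + |εb * y| + |εa * εb * z| + 1) ≤ (n : ℤ) := by
    simp only [Int.abs_eq_natAbs]; exact_mod_cast hn
  have hC : ((n + 1).choose 2 : ℤ) * 2 = (n + 1) * n := by
    exact_mod_cast by
      rw [Nat.choose_two_right, Nat.add_sub_cancel,
        Nat.div_mul_cancel (by simpa [mul_comm] using (Nat.even_mul_succ_self n).two_dvd)]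
  -- `g⁻¹ hₙ` is a staircase of `n - εa x` steps `a ^ εa` and `n - εb y` steps `b ^ εb`
  -- enclosing area `T`
  set T := ((n + 1).choose 2 : ℤ) - εa * εb * z - εa * x * (n - εb * y)
  have hfactor : (a ^ εa * b ^ εb) ^ n =
      ⟨x, y, z⟩ * ⟨εa * (n - εa * x), εb * (n - εb * y), εa * εb * T⟩ := by
    rw [zpow_mul_zpow_pow, mul_def]
    ext
    · linear_combination x * hεa
    · linear_combination y * hεb
    · linear_combination (εb * εb * z + εb * x * n - εb * εb * x * y) * hεa + z * hεb
  obtain ⟨hT₀, hT⟩ := sub_mul_sub_mem_Icc_of_two_mul_le hC hn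
  have hA : εa * x ≤ n := by
    linarith [le_abs_self (εa * x), abs_nonneg (εb * y), abs_nonneg (εa * εb * z)]
  have hB : εb * y ≤ n := by
    linarith [le_abs_self (εb * y), abs_nonneg (εa * x), abs_nonneg (εa * εb * z)]
  rw [hg, hfactor, wdist_mul_mk ha hb _ (sub_nonneg.mpr hA) (sub_nonneg.mpr hB) hT₀ hT]
  ring

end Heis

open Heis in
/-- For `hₙ = (a^{ε_a} b^{ε_b})^n` with `ε_a, ε_b = ±1` and any fixed `g = c^z b^y a^x`,
for all sufficiently large `n` one has `d(g, hₙ) = |ε_b n − y| + |ε_a n − x|`; consequently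
`d(g, hₙ) − d(e, hₙ) → −ε_a x − ε_b y` as `n → ∞`. -/
theorem stmt16 (εa εb : ℤ) (ha : εa = 1 ∨ εa = -1) (hb : εb = 1 ∨ εb = -1)
    (x y z : ℤ) :
    (∃ N : ℕ, ∀ n : ℕ, N ≤ n →
      (wdist (c ^ z * b ^ y * a ^ x) ((a ^ εa * b ^ εb) ^ n) : ℤ)
        = |εb * (n : ℤ) - y| + |εa * (n : ℤ) - x|) ∧
    Filter.Tendsto
      (fun n : ℕ =>
        (wdist (c ^ z * b ^ y * a ^ x) ((a ^ εa * b ^ εb) ^ n) : ℝ)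
          - (wdist 1 ((a ^ εa * b ^ εb) ^ n) : ℝ))
      Filter.atTop (nhds ((-εa * x - εb * y : ℤ) : ℝ)) := by
  have hdist := eventually_wdist_zpow_mul_zpow_pow ha hb
  constructor
  · obtain ⟨N, hN⟩ := Filter.eventually_atTop.mp
      ((hdist x y z).and (Filter.eventually_ge_atTop (x.natAbs + y.natAbs)))
    refine ⟨N, fun n hn => ?_⟩
    obtain ⟨hn_dist, hn_large⟩ := hN n hn
    have hx : |x| ≤ n := by rw [Int.abs_eq_natAbs]; omega
    have hy : |y| ≤ n := by rw [Int.abs_eq_natAbs]; omega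
    rw [hn_dist, abs_mul_natCast_sub ha hx, abs_mul_natCast_sub hb hy]
  · refine tendsto_const_nhds.congr' ?_
    filter_upwards [hdist x y z, hdist 0 0 0] with n hg h1
    simp only [zpow_zero, mul_one, mul_zero, sub_zero] at h1
    have hdiff : (wdist (c ^ z * b ^ y * a ^ x) ((a ^ εa * b ^ εb) ^ n) : ℤ)
        - wdist 1 ((a ^ εa * b ^ εb) ^ n) = -εa * x - εb * y := by
      rw [hg, h1]; ring
    exact_mod_cast hdiff.symm
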